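/- If n·aₙ → 0 and the sequence (F(vₙ)) with vₙ := 1 − 1/n is Cauchy, then |F(vₘ) − sₙ| → 0 as m,n → ∞. -/

import Mathlib

/-!
Put `x = 1 - 1/n` and split `F(x) - sₙ = ∑_{i ≤ n} aᵢ (xⁱ - 1) + ∑_{i > n} aᵢ xⁱ`.
By Bernoulli `|1 - xⁱ| ≤ i (1 - x) = i/n`, so the head is at most the Cesàro mean
`(1/n) ∑_{i ≤ n} |i aᵢ|`, which tends to `0`. In the tail `|aᵢ| ≤ sup_{j > n} |j aⱼ| / n` and
`∑ xⁱ = n`, so it is at most `sup_{j > n} |j aⱼ| → 0`. Hence `F(vₙ) - sₙ → 0`, and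
`F(vₘ) - sₙ = (F(vₘ) - F(vₙ)) + (F(vₙ) - sₙ)` is small by the Cauchy hypothesis.
-/

open Filter Topology Finset

theorem Filter.Tendsto.cesaro_range_succ {u : ℕ → ℝ} {l : ℝ} (h : Tendsto u atTop (𝓝 l)) :
    Tendsto (fun n : ℕ => (n⁻¹ : ℝ) * ∑ i ∈ range (n + 1), u i) atTop (𝓝 l) := by
  have hlast : Tendsto (fun n : ℕ => (n⁻¹ : ℝ) * u n) atTop (𝓝 0) := by
    simpa using (tendsto_inv_atTop_zero.comp tendsto_natCast_atTop_atTop).mul h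
  simpa [sum_range_succ, mul_add] using h.cesaro.add hlast

theorem abs_one_sub_pow_le {x : ℝ} (hx0 : 0 ≤ x) (hx1 : x ≤ 1) (i : ℕ) :
    |1 - x ^ i| ≤ i * (1 - x) := by
  rw [abs_of_nonneg (sub_nonneg.2 (pow_le_one₀ hx0 hx1))]
  linarith [one_add_mul_sub_le_pow (by linarith : (-1 : ℝ) ≤ x) i]

section PowerSeries

variable {a : ℕ → ℝ} {x : ℝ}

theorem abs_sum_mul_pow_sub_sum_le (hx0 : 0 ≤ x) (hx1 : x ≤ 1) (n : ℕ) :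
    |∑ i ∈ range n, a i * x ^ i - ∑ i ∈ range n, a i|
      ≤ (1 - x) * ∑ i ∈ range n, |(i : ℝ) * a i| := by
  rw [← sum_sub_distrib, mul_sum]
  refine (abs_sum_le_sum_abs _ _).trans (sum_le_sum fun i _ => ?_)
  calc |a i * x ^ i - a i| = |a i| * |1 - x ^ i| := by
        rw [← abs_mul, ← abs_neg]; ring_nf
    _ ≤ |a i| * (i * (1 - x)) := by gcongr; exact abs_one_sub_pow_le hx0 hx1 i
    _ = (1 - x) * |(i : ℝ) * a i| := by rw [abs_mul, Nat.abs_cast]; ring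

variable {n : ℕ} {b : ℝ}

theorem abs_mul_pow_add_le (hx0 : 0 ≤ x) (hx1 : x ≤ 1) (hb : ∀ i, |a (i + n)| ≤ b) (i : ℕ) :
    |a (i + n) * x ^ (i + n)| ≤ b * x ^ i := by
  rw [abs_mul, abs_pow, abs_of_nonneg hx0]
  exact mul_le_mul (hb i) (pow_le_pow_of_le_one hx0 hx1 (by omega)) (by positivity)
    ((abs_nonneg _).trans (hb 0))

theorem summable_mul_pow_of_abs_le (hx0 : 0 ≤ x) (hx1 : x < 1) (hb : ∀ i, |a (i + n)| ≤ b) :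
    Summable fun i => a i * x ^ i :=
  (summable_nat_add_iff n).1 <| .of_norm_bounded
    ((summable_geometric_of_lt_one hx0 hx1).mul_left b) (abs_mul_pow_add_le hx0 hx1.le hb)

theorem abs_tsum_mul_pow_add_le (hx0 : 0 ≤ x) (hx1 : x < 1) (hb : ∀ i, |a (i + n)| ≤ b) :
    |∑' i, a (i + n) * x ^ (i + n)| ≤ b / (1 - x) := by
  rw [div_eq_mul_inv]
  exact tsum_of_norm_bounded (f := fun i => a (i + n) * x ^ (i + n)) ((hasSum_geometric_of_lt_one hx0 hx1).mul_left b)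
    (abs_mul_pow_add_le hx0 hx1.le hb)

theorem abs_tsum_mul_pow_sub_sum_le (hx0 : 0 ≤ x) (hx1 : x < 1) (hb : ∀ i, |a (i + n)| ≤ b) :
    |∑' i, a i * x ^ i - ∑ i ∈ range n, a i|
      ≤ (1 - x) * ∑ i ∈ range n, |(i : ℝ) * a i| + b / (1 - x) := by
  rw [← (summable_mul_pow_of_abs_le hx0 hx1 hb).sum_add_tsum_nat_add n, add_sub_right_comm]
  exact (abs_add_le _ _).trans
    (add_le_add (abs_sum_mul_pow_sub_sum_le hx0 hx1.le n) (abs_tsum_mul_pow_add_le hx0 hx1 hb))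

end PowerSeries

theorem tendsto_tsum_mul_pow_one_sub_inv_sub_sum {a : ℕ → ℝ}
    (ha : Tendsto (fun n : ℕ => (n : ℝ) * a n) atTop (𝓝 0)) :
    Tendsto (fun n : ℕ => ∑' i, a i * (1 - 1 / (n : ℝ)) ^ i - ∑ i ∈ range (n + 1), a i)
      atTop (𝓝 0) := by
  have habs : Tendsto (fun n : ℕ => |(n : ℝ) * a n|) atTop (𝓝 0) := by simpa using ha.abs
  refine Metric.tendsto_nhds.2 fun ε hε => ?_
  have hhead : ∀ᶠ n : ℕ in atTop, (n⁻¹ : ℝ) * ∑ i ∈ range (n + 1), |(i : ℝ) * a i| < ε / 2 :=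
    habs.cesaro_range_succ.eventually (gt_mem_nhds (half_pos hε))
  have htail : ∀ᶠ n : ℕ in atTop, ∀ j, n ≤ j → |(j : ℝ) * a j| ≤ ε / 2 :=
    eventually_forall_ge_atTop.2 <| habs.eventually (ge_mem_nhds (half_pos hε))
  filter_upwards [hhead, htail, eventually_ge_atTop 1] with n hhead htail hn
  have hn1 : (1 : ℝ) ≤ n := by exact_mod_cast hn
  have hn : (0 : ℝ) < n := by linarith
  have hb : ∀ i, |a (i + (n + 1))| ≤ ε / 2 / n := fun i => by
    have hj := htail (i + (n + 1)) (by omega)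
    rw [abs_mul, Nat.abs_cast] at hj
    rw [le_div_iff₀ hn]
    nlinarith [abs_nonneg (a (i + (n + 1))), (by push_cast; linarith : (n : ℝ) ≤ ↑(i + (n + 1)))]
  have hx0 : 0 ≤ 1 - 1 / (n : ℝ) := by rwa [sub_nonneg, div_le_one hn]
  have hx1 : 1 - 1 / (n : ℝ) < 1 := by simpa using hn
  have hbound := abs_tsum_mul_pow_sub_sum_le hx0 hx1 hb
  have htail_bound : ε / 2 / n / (1 / n) = ε / 2 := by field_simp
  rw [sub_sub_cancel, htail_bound] at hbound
  rw [inv_eq_one_div] at hhead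
  rw [Real.dist_eq, sub_zero]
  linarith

theorem tauber_cauchy_variant (a : ℕ → ℝ)
    (hTaub : Tendsto (fun n : ℕ => (n : ℝ) * a n) atTop (nhds 0))
    (hC : CauchySeq (fun n : ℕ => ∑' i, a i * (1 - 1/(n:ℝ))^i)) :
    ∀ ε : ℝ, 0 < ε → ∃ N : ℕ, ∀ m n : ℕ, N ≤ m → N ≤ n →
      |(∑' i, a i * (1 - 1/(m:ℝ))^i) - ∑ i ∈ Finset.range (n+1), a i| ≤ ε := by
  intro ε hε
  obtain ⟨N₁, hN₁⟩ := Metric.cauchySeq_iff.1 hC (ε / 2) (half_pos hε)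
  obtain ⟨N₂, hN₂⟩ :=
    Metric.tendsto_atTop.1 (tendsto_tsum_mul_pow_one_sub_inv_sub_sum hTaub) (ε / 2) (half_pos hε)
  refine ⟨max N₁ N₂, fun m n hm hn => ?_⟩
  have hF := hN₁ m (le_of_max_le_left hm) n (le_of_max_le_left hn)
  have hs := hN₂ n (le_of_max_le_right hn)
  rw [Real.dist_eq] at hF
  rw [Real.dist_eq, sub_zero] at hs
  calc |∑' i, a i * (1 - 1 / (m : ℝ)) ^ i - ∑ i ∈ range (n + 1), a i|
      ≤ |∑' i, a i * (1 - 1 / (m : ℝ)) ^ i - ∑' i, a i * (1 - 1 / (n : ℝ)) ^ i|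
        + |∑' i, a i * (1 - 1 / (n : ℝ)) ^ i - ∑ i ∈ range (n + 1), a i| := abs_sub_le _ _ _
    _ ≤ ε := by linarith
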